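/- arXiv:2304.11388 — 5 statements merged into one kernel-verified Lean document; each statement's English description precedes it below -/
import Mathlib

section
/- For every positive integer x and every positive integer t, the t-th iterates T^t(x) and T^t(x + 2^t) have opposite parity, where T is the accelerated Collatz map. -/
def T (x : ℕ) : ℕ := if x % 2 = 0 then x / 2 else (3 * x + 1) / 2

lemma key (t : ℕ) : ∀ c x : ℕ, ∃ k : ℕ, T^[t] (x + c * 2 ^ t) = T^[t] x + c * 3 ^ k := by
  induction t with
  | zero => intro c x; exact ⟨0, by simp⟩
  | succ t ih =>
    intro c x
    have hp : c * 2 ^ (t + 1) = 2 * (c * 2 ^ t) := by ring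
    have hp3 : 3 * c * 2 ^ t = 3 * (c * 2 ^ t) := by ring
    rcases Nat.even_or_odd x with he | ho
    · have hx2 : x % 2 = 0 := Nat.even_iff.mp he
      have hT : T (x + c * 2 ^ (t + 1)) = T x + c * 2 ^ t := by
        unfold T
        rw [hp]
        generalize c * 2 ^ t = m
        have : (x + 2 * m) % 2 = 0 := by omega
        rw [if_pos this, if_pos hx2]
        omega
      obtain ⟨k, hk⟩ := ih c (T x)
      exact ⟨k, by rw [Function.iterate_succ_apply, Function.iterate_succ_apply, hT, hk]⟩
    · have hx2 : x % 2 = 1 := Nat.odd_iff.mp ho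
      have hT : T (x + c * 2 ^ (t + 1)) = T x + 3 * c * 2 ^ t := by
        unfold T
        rw [hp, hp3]
        generalize c * 2 ^ t = m
        have : (x + 2 * m) % 2 = 1 := by omega
        rw [this, hx2]
        simp only [if_neg (by omega : ¬(1 = 0))]
        omega
      obtain ⟨k, hk⟩ := ih (3 * c) (T x)
      refine ⟨k + 1, ?_⟩
      rw [Function.iterate_succ_apply, Function.iterate_succ_apply, hT, hk]
      ring

theorem stmt_5 (x t : ℕ) (hx : 0 < x) (ht : 0 < t) :
    T^[t] (x + 2 ^ t) % 2 ≠ T^[t] x % 2 := by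
  obtain ⟨k, hk⟩ := key t 1 x
  have h3 : 3 ^ k % 2 = 1 := by
    rw [Nat.pow_mod]; simp
  rw [one_mul, one_mul] at hk
  rw [hk]
  omega
end

section
/- Conversely, if the parity patterns (parity of T^j(x₁)) for j = 0, ..., t-1 of two positive integers x₁ and x₂ coincide, then x₁ ≡ x₂ (mod 2^t). -/
lemma two_mul_T_nat (x : ℕ) : 2 * T x = if x % 2 = 0 then x else 3 * x + 1 := by
  unfold T
  split_ifs with hx <;> omega

lemma two_mul_T (x : ℕ) : (2 * T x : ℤ) = if x % 2 = 0 then (x : ℤ) else 3 * x + 1 := by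
  have := two_mul_T_nat x
  split_ifs at this ⊢ with hx <;> exact_mod_cast this

lemma aux (t : ℕ) : ∀ x₁ x₂ : ℕ, (∀ j < t, T^[j] x₁ % 2 = T^[j] x₂ % 2) →
    x₁ ≡ x₂ [MOD 2 ^ t] := by
  induction t with
  | zero => intro x₁ x₂ _; simp [Nat.ModEq]; omega
  | succ t ih =>
    intro x₁ x₂ h
    have h0 : x₁ % 2 = x₂ % 2 := by simpa using h 0 (Nat.succ_pos t)
    have hT : T x₁ ≡ T x₂ [MOD 2 ^ t] := by
      apply ih
      intro j hj
      have := h (j + 1) (by omega)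
      simpa [Function.iterate_succ_apply] using this
    have hd : ((2 : ℤ) ^ t) ∣ ((T x₂ : ℤ) - T x₁) := by
      have := (Nat.modEq_iff_dvd (n := 2 ^ t)).mp hT
      exact_mod_cast this
    have hd2 : ((2 : ℤ) ^ (t + 1)) ∣ (2 * (T x₂ : ℤ) - 2 * (T x₁ : ℤ)) := by
      have h' := mul_dvd_mul_left (2 : ℤ) hd
      rw [pow_succ, mul_comm ((2:ℤ)^t) 2]
      calc (2 : ℤ) * 2 ^ t ∣ 2 * ((T x₂ : ℤ) - T x₁) := h'
        _ = 2 * (T x₂ : ℤ) - 2 * T x₁ := by ring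
    have e₁ := two_mul_T x₁
    have e₂ := two_mul_T x₂
    have goal : ((2 : ℤ) ^ (t + 1)) ∣ ((x₂ : ℤ) - x₁) := by
      by_cases hx : x₁ % 2 = 0
      · rw [if_pos hx] at e₁
        rw [if_pos (h0 ▸ hx)] at e₂
        rw [e₁, e₂] at hd2
        exact hd2
      · rw [if_neg hx] at e₁
        rw [if_neg (h0 ▸ hx)] at e₂
        rw [e₁, e₂] at hd2
        have h3 : ((2 : ℤ) ^ (t + 1)) ∣ 3 * ((x₂ : ℤ) - x₁) := by
          calc (2 : ℤ) ^ (t+1) ∣ (3 * (x₂ : ℤ) + 1) - (3 * x₁ + 1) := hd2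
            _ = 3 * ((x₂ : ℤ) - x₁) := by ring
        have hcop : IsCoprime ((2 : ℤ) ^ (t + 1)) 3 := by
          exact IsCoprime.pow_left (by
            rw [Int.isCoprime_iff_gcd_eq_one]; decide)
        exact hcop.dvd_of_dvd_mul_left h3
    exact (Nat.modEq_iff_dvd).mpr (by exact_mod_cast goal)

theorem stmt_7 (x₁ x₂ t : ℕ) (h₁ : 0 < x₁) (h₂ : 0 < x₂)
    (h : ∀ j < t, T^[j] x₁ % 2 = T^[j] x₂ % 2) :
    x₁ ≡ x₂ [MOD 2 ^ t] := by
  exact aux t x₁ x₂ h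
end

section
/- Let x be a positive integer, t ≥ 1, and suppose T^j applied to x has a fixed parity pattern for j < t. If P ≡ 0 (mod 2^t), then T^t(x + P) = T^t(x) + 3^c · (P / 2^t), where c is the number of j < t with T^j(x) odd. In particular T^t(x + m·2^t) = T^t(x) + 3^c · m for every positive integer m. -/
def oddCount (x t : ℕ) : ℕ := ((Finset.range t).filter (fun j => Odd (T^[j] x))).card

lemma oddCount_succ (x t : ℕ) :
    oddCount x (t + 1) = oddCount (T x) t + if Odd x then 1 else 0 := by
  simp only [oddCount, Finset.card_filter, Finset.sum_range_succ', Function.iterate_succ_apply,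
    Function.iterate_zero_apply]
  rfl

lemma T_add_two_mul (x q : ℕ) : T (x + 2 * q) = T x + (if Odd x then 3 else 1) * q := by
  simp only [T, Nat.odd_iff]
  split_ifs <;> omega

/-- Adding a multiple of `2 ^ t` does not change the parities of the first `t` steps, and each
odd step multiplies the perturbation by `3 / 2`, each even step by `1 / 2`. -/
lemma iterate_T_add_two_pow_mul (t : ℕ) : ∀ x q : ℕ,
    T^[t] (x + 2 ^ t * q) = T^[t] x + 3 ^ oddCount x t * q := by
  induction t with
  | zero => simp [oddCount]
  | succ n ih =>
    intro x q
    rw [Function.iterate_succ_apply, Function.iterate_succ_apply, pow_succ', mul_assoc,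
      T_add_two_mul, oddCount_succ]
    by_cases hx : Odd x
    · rw [if_pos hx, if_pos hx, mul_left_comm, ih, pow_succ, mul_assoc]
    · rw [if_neg hx, if_neg hx, one_mul, ih, add_zero]

theorem stmt_9_general (x t : ℕ) :
    (∀ P : ℕ, 0 < P → 2 ^ t ∣ P →
      T^[t] (x + P) =
        T^[t] x + 3 ^ (((Finset.range t).filter (fun j => Odd (T^[j] x))).card) * (P / 2 ^ t)) ∧
    (∀ m : ℕ, 0 < m →
      T^[t] (x + m * 2 ^ t) =
        T^[t] x + 3 ^ (((Finset.range t).filter (fun j => Odd (T^[j] x))).card) * m) := by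
  constructor
  · rintro P - ⟨q, rfl⟩
    rw [Nat.mul_div_cancel_left q (by positivity)]
    exact iterate_T_add_two_pow_mul t x q
  · intro m _
    rw [mul_comm]
    exact iterate_T_add_two_pow_mul t x m

theorem stmt_9 (x t : ℕ) (hx : 0 < x) (ht : 1 ≤ t) :
    (∀ P : ℕ, 0 < P → 2 ^ t ∣ P →
      T^[t] (x + P) =
        T^[t] x + 3 ^ (((Finset.range t).filter (fun j => Odd (T^[j] x))).card) * (P / 2 ^ t)) ∧
    (∀ m : ℕ, 0 < m →
      T^[t] (x + m * 2 ^ t) =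
        T^[t] x + 3 ^ (((Finset.range t).filter (fun j => Odd (T^[j] x))).card) * m) :=
  stmt_9_general x t
end

section
/- Let x be a positive integer, t ≥ 1, c the number of odd values among T^0(x), ..., T^{t-1}(x), and m a positive integer. Then T^t(x + m·2^t) has the same parity as T^t(x) if m is even, and the opposite parity if m is odd. -/
lemma T_key : ∀ t x m : ℕ, ∃ k, T^[t] (x + m * 2 ^ t) = T^[t] x + m * 3 ^ k := by
  intro t
  induction t with
  | zero => intro x m; exact ⟨0, by simp⟩
  | succ t ih =>
    intro x m
    rw [Function.iterate_succ_apply, Function.iterate_succ_apply]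
    rcases Nat.even_or_odd x with hx | hx
    · have h2 : x % 2 = 0 := Nat.even_iff.mp hx
      have hT : T (x + m * 2 ^ (t + 1)) = T x + m * 2 ^ t := by
        have he : x + m * 2 ^ (t + 1) = x + 2 * (m * 2 ^ t) := by ring
        rw [he]
        generalize m * 2 ^ t = n
        unfold T
        rw [if_pos (by omega), if_pos h2]
        omega
      rw [hT]; exact ih (T x) m
    · have h2 : x % 2 = 1 := Nat.odd_iff.mp hx
      have hT : T (x + m * 2 ^ (t + 1)) = T x + (3 * m) * 2 ^ t := by
        have he : x + m * 2 ^ (t + 1) = x + 2 * (m * 2 ^ t) := by ring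
        have he2 : (3 * m) * 2 ^ t = 3 * (m * 2 ^ t) := by ring
        rw [he, he2]
        generalize m * 2 ^ t = n
        unfold T
        rw [if_neg (by omega), if_neg (by omega)]
        omega
      rw [hT]
      obtain ⟨k, hk⟩ := ih (T x) (3 * m)
      exact ⟨k + 1, by rw [hk]; ring⟩

theorem stmt_10 (x t m : ℕ) (hx : 0 < x) (ht : 1 ≤ t) (hm : 0 < m) :
    (Even m → T^[t] (x + m * 2 ^ t) % 2 = T^[t] x % 2) ∧
    (Odd m → T^[t] (x + m * 2 ^ t) % 2 ≠ T^[t] x % 2) := by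
  obtain ⟨k, hk⟩ := T_key t x m
  have h3 : (3 : ℕ) ^ k % 2 = 1 := Nat.odd_iff.mp (Odd.pow ⟨1, rfl⟩)
  have hmm : m * 3 ^ k % 2 = m % 2 := by rw [Nat.mul_mod, h3, mul_one, Nat.mod_mod]
  constructor
  · intro hme
    have : m % 2 = 0 := Nat.even_iff.mp hme
    rw [hk]
    omega
  · intro hmo
    have : m % 2 = 1 := Nat.odd_iff.mp hmo
    rw [hk]
    omega
end

section
/- Partition Theorem: Fix t ≥ 1 and an integer i with 0 ≤ i < 2^t. Every x ≡ i (mod 2^t) has the same parity sequence (T^j(x) mod 2) for 0 ≤ j < t. Moreover, either all x ≡ i (mod 2^{t+1}) satisfy 'T^t(x) is even' and all x ≡ i + 2^t (mod 2^{t+1}) satisfy 'T^t(x) is odd', or vice versa; i.e., the residue class [i]_{2^t} splits into exactly two residue classes mod 2^{t+1} on which the (t+1)-th Collatz transformation is O and I respectively. -/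
lemma cancel2 {m a b : ℕ} (h : 2 * a ≡ 2 * b [MOD 2 * m]) : a ≡ b [MOD m] := by
  unfold Nat.ModEq at *
  rw [Nat.mul_mod_mul_left, Nat.mul_mod_mul_left] at h
  omega

lemma parity_of_modeq {k x y : ℕ} (h : x ≡ y [MOD 2 ^ (k + 1)]) : x % 2 = y % 2 := by
  have h2 : (2 : ℕ) ∣ 2 ^ (k + 1) := dvd_pow_self 2 (Nat.succ_ne_zero k)
  exact h.of_dvd h2

lemma TA (k x y : ℕ) (h : x ≡ y [MOD 2 ^ (k + 1)]) : T x ≡ T y [MOD 2 ^ k] := by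
  have hp := parity_of_modeq h
  unfold T
  rw [hp]
  by_cases he : y % 2 = 0
  · simp only [he, if_true]
    apply cancel2 (m := 2 ^ k)
    have hx2 : 2 * (x / 2) = x := by omega
    have hy2 : 2 * (y / 2) = y := by omega
    rw [hx2, hy2, ← pow_succ']
    exact h
  · simp only [he, if_false]
    apply cancel2 (m := 2 ^ k)
    have hxo : x % 2 = 1 := by omega
    have hyo : y % 2 = 1 := by omega
    have hx2 : 2 * ((3 * x + 1) / 2) = 3 * x + 1 := by omega
    have hy2 : 2 * ((3 * y + 1) / 2) = 3 * y + 1 := by omega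
    rw [hx2, hy2, ← pow_succ']
    exact (h.mul_left 3).add_right 1

lemma TA_iter (k j x y : ℕ) (h : x ≡ y [MOD 2 ^ (k + j)]) :
    T^[j] x ≡ T^[j] y [MOD 2 ^ k] := by
  induction j generalizing x y with
  | zero => simpa using h
  | succ j ih =>
    rw [Function.iterate_succ_apply, Function.iterate_succ_apply]
    apply ih
    have := TA (k + j) x y (by rwa [show k + (j+1) = (k+j) + 1 by ring] at h)
    exact this

lemma TB (k x y : ℕ) (h : x ≡ y + 2 ^ (k + 1) [MOD 2 ^ (k + 2)]) :
    T x ≡ T y + 2 ^ k [MOD 2 ^ (k + 1)] := by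
  have hp : x % 2 = y % 2 := by
    have := parity_of_modeq (k := k + 1) h
    have h2 : (y + 2 ^ (k + 1)) % 2 = y % 2 := by
      have : 2 ∣ 2 ^ (k+1) := dvd_pow_self 2 (Nat.succ_ne_zero k)
      omega
    omega
  unfold T
  rw [hp]
  by_cases he : y % 2 = 0
  · simp only [he, if_true]
    apply cancel2 (m := 2 ^ (k + 1))
    have hx2 : 2 * (x / 2) = x := by omega
    have hy2 : 2 * (y / 2 + 2 ^ k) = y + 2 ^ (k + 1) := by
      have : 2 * (y / 2) = y := by omega
      rw [mul_add, this, pow_succ]; ring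
    rw [hx2, hy2, ← pow_succ']
    exact h
  · simp only [he, if_false]
    apply cancel2 (m := 2 ^ (k + 1))
    have hxo : x % 2 = 1 := by omega
    have hyo : y % 2 = 1 := by omega
    have hx2 : 2 * ((3 * x + 1) / 2) = 3 * x + 1 := by omega
    have hy2 : 2 * ((3 * y + 1) / 2 + 2 ^ k) = 3 * y + 1 + 2 ^ (k + 1) := by
      have : 2 * ((3 * y + 1) / 2) = 3 * y + 1 := by omega
      rw [mul_add, this, pow_succ]; ring
    rw [hx2, hy2, ← pow_succ']
    calc 3 * x + 1 ≡ 3 * (y + 2 ^ (k + 1)) + 1 [MOD 2 ^ (k + 2)] :=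
          (h.mul_left 3).add_right 1
      _ ≡ 3 * y + 1 + 2 ^ (k + 1) [MOD 2 ^ (k + 2)] := by
          have : 3 * (y + 2 ^ (k + 1)) + 1 = (3 * y + 1 + 2 ^ (k + 1)) + 2 ^ (k + 2) := by
            rw [pow_succ]; ring
          rw [this]
          exact Nat.add_modEq_right

lemma TB_iter (j k x y : ℕ) (h : x ≡ y + 2 ^ (k + j) [MOD 2 ^ (k + j + 1)]) :
    T^[j] x ≡ T^[j] y + 2 ^ k [MOD 2 ^ (k + 1)] := by
  induction j generalizing x y with
  | zero => simpa using h
  | succ j ih =>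
    rw [Function.iterate_succ_apply, Function.iterate_succ_apply]
    apply ih
    have h' : x ≡ y + 2 ^ (k + j + 1) [MOD 2 ^ (k + j + 2)] := by
      rwa [show k + (j + 1) = k + j + 1 by ring,
           show k + j + 1 + 1 = k + j + 2 by ring] at h
    exact TB (k + j) x y h'

theorem stmt_11 (t i : ℕ) (ht : 1 ≤ t) (hi : i < 2 ^ t) :
    (∀ x y : ℕ, 0 < x → 0 < y → x ≡ i [MOD 2 ^ t] → y ≡ i [MOD 2 ^ t] →
      ∀ j < t, T^[j] x % 2 = T^[j] y % 2) ∧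
    (((∀ x : ℕ, 0 < x → x ≡ i [MOD 2 ^ (t + 1)] → Even (T^[t] x)) ∧
       (∀ x : ℕ, 0 < x → x ≡ i + 2 ^ t [MOD 2 ^ (t + 1)] → Odd (T^[t] x))) ∨
     ((∀ x : ℕ, 0 < x → x ≡ i [MOD 2 ^ (t + 1)] → Odd (T^[t] x)) ∧
       (∀ x : ℕ, 0 < x → x ≡ i + 2 ^ t [MOD 2 ^ (t + 1)] → Even (T^[t] x)))) := by
  constructor
  · intro x y _ _ hx hy j hj
    have hxy : x ≡ y [MOD 2 ^ t] := hx.trans hy.symm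
    have hkj : t = (t - j - 1 + 1) + j := by omega
    have := TA_iter (t - j - 1 + 1) j x y (by rwa [hkj] at hxy)
    exact parity_of_modeq this
  · -- parity of T^[t] x determined mod 2 by x mod 2^(t+1)
    have hO : ∀ x : ℕ, x ≡ i [MOD 2 ^ (t + 1)] → T^[t] x % 2 = T^[t] i % 2 := by
      intro x hx
      have := TA_iter 1 t x i (by rwa [show 1 + t = t + 1 by ring])
      simpa [Nat.ModEq] using this
    have hI : ∀ x : ℕ, x ≡ i + 2 ^ t [MOD 2 ^ (t + 1)] →
        T^[t] x % 2 = (T^[t] i + 1) % 2 := by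
      intro x hx
      have := TB_iter t 0 x i (by simpa using hx)
      simpa [Nat.ModEq] using this
    by_cases hpar : T^[t] i % 2 = 0
    · left
      constructor
      · intro x _ hx
        have := hO x hx
        exact Nat.even_iff.mpr (by omega)
      · intro x _ hx
        have := hI x hx
        exact Nat.odd_iff.mpr (by omega)
    · right
      constructor
      · intro x _ hx
        have := hO x hx
        exact Nat.odd_iff.mpr (by omega)
      · intro x _ hx
        have := hI x hx
        exact Nat.even_iff.mpr (by omega)
end
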